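/- For all finite simple graphs G₁ and G₂, the Shannon capacity of the disjoint union satisfies c(G₁ + G₂) ≥ c(G₁) + c(G₂). -/

import Mathlib

/-- The `k`-th strong power of a simple graph: vertices are `k`-tuples, and two distinct
tuples are adjacent iff in each coordinate the entries are equal or adjacent. -/
def gStrongPow {α : Type*} (G : SimpleGraph α) (k : ℕ) :
    SimpleGraph (Fin k → α) where
  Adj u v := u ≠ v ∧ ∀ i, u i = v i ∨ G.Adj (u i) (v i)
  symm := by
    constructor
    rintro u v ⟨hne, h⟩
    exact ⟨hne.symm, fun i => (h i).imp Eq.symm (fun h' => h'.symm)⟩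
  loopless := ⟨fun u h => h.1 rfl⟩
/-- The independence number of a graph on a finite vertex type: the maximum size of a
set of pairwise non-adjacent vertices. -/
noncomputable def gIndepNum {α : Type*} [Fintype α] (G : SimpleGraph α) : ℕ :=
  sSup {n | ∃ s : Finset α, s.card = n ∧ (s : Set α).Pairwise (fun a b => ¬ G.Adj a b)}
/-- The Shannon capacity `c(G) = sup_{k ≥ 1} α(G^k)^(1/k)`. -/
noncomputable def gShannonCapacity {α : Type*} [Fintype α] (G : SimpleGraph α) : ℝ :=
  ⨆ k : ℕ, (gIndepNum (gStrongPow G (k + 1)) : ℝ) ^ ((1 : ℝ) / (k + 1))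

/-!
Fix `m ≥ 1` and put `x = α(G₁^m)^(1/m)`, `y = α(G₂^m)^(1/m)`. Writing vertices of `G₁` on a
set `S` of `i` coordinates and vertices of `G₂` on the others embeds `G₁^i ⊠ G₂^(n-i)` into
`(G₁ + G₂)^n`, and words with different `S` are never adjacent, so
`α((G₁ + G₂)^n) ≥ C(n,i) α(G₁^i) α(G₂^(n-i))` for every `i`. As `k ↦ α(G^k)` is
supermultiplicative, `x^i ≤ C α(G₁^i)` and `y^i ≤ C α(G₂^i)` for a constant `C`. Hence
`(x + y)^n = ∑ C(n,i) x^i y^(n-i) ≤ C² (n + 1) α((G₁ + G₂)^n) ≤ C² (n + 1) c(G₁ + G₂)^n`,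
and since a polynomial factor cannot beat an exponential, `x + y ≤ c(G₁ + G₂)`.
Supermultiplicativity also gives `α(G^k)^(1/k) ≤ α(G^(kl))^(1/(kl))`, so any pair `k, l` can
be replaced by the common `m = kl`.
-/

open Function Filter Finset SimpleGraph Topology

section

variable {α β : Type*}

namespace SimpleGraph

def strongProd (G : SimpleGraph α) (H : SimpleGraph β) : SimpleGraph (α × β) where
  Adj x y := x ≠ y ∧ (x.1 = y.1 ∨ G.Adj x.1 y.1) ∧ (x.2 = y.2 ∨ H.Adj x.2 y.2)
  symm := ⟨fun _ _ ⟨hne, h₁, h₂⟩ =>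
    ⟨hne.symm, h₁.imp Eq.symm G.adj_symm, h₂.imp Eq.symm H.adj_symm⟩⟩
  loopless := ⟨fun _ h => h.1 rfl⟩

variable {G : SimpleGraph α} {H : SimpleGraph β}

theorem strongProd_adj {x y : α × β} :
    (G.strongProd H).Adj x y ↔
      x ≠ y ∧ (x.1 = y.1 ∨ G.Adj x.1 y.1) ∧ (x.2 = y.2 ∨ H.Adj x.2 y.2) :=
  Iff.rfl

theorem eq_or_strongProd_adj {x y : α × β} :
    x = y ∨ (G.strongProd H).Adj x y ↔
      (x.1 = y.1 ∨ G.Adj x.1 y.1) ∧ (x.2 = y.2 ∨ H.Adj x.2 y.2) := by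
  rw [strongProd_adj]
  refine ⟨?_, fun h => (em (x = y)).imp_right fun hne => ⟨hne, h⟩⟩
  rintro (rfl | ⟨-, h⟩)
  · simp
  · exact h

theorem eq_or_sum_adj {a b : α ⊕ β} :
    a = b ∨ (G ⊕g H).Adj a b ↔
      Sum.LiftRel (fun x y => x = y ∨ G.Adj x y) (fun x y => x = y ∨ H.Adj x y) a b := by
  cases a <;> cases b <;> simp

theorem comap_le_of_eq_or_adj {f : α → β}
    (h : ∀ x y, f x = f y ∨ H.Adj (f x) (f y) → x = y ∨ G.Adj x y) : H.comap f ≤ G :=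
  fun x y hxy => (h x y (Or.inr hxy)).resolve_left hxy.ne

theorem indepNum_le_of_injective [Finite β] {f : α → β} (hf : Injective f)
    (h : H.comap f ≤ G) : G.indepNum ≤ H.indepNum := by
  obtain ⟨s, hs⟩ := G.exists_isNIndepSet_indepNum
  rw [← hs.card_eq, ← s.card_map ⟨f, hf⟩]
  refine IsIndepSet.card_le_indepNum ?_
  simp only [coe_map, Embedding.coeFn_mk]
  rintro _ ⟨x, hx, rfl⟩ _ ⟨y, hy, rfl⟩ hne hadj
  exact hs.isIndepSet hx hy (ne_of_apply_ne f hne) (h hadj)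

theorem one_le_indepNum [Finite α] [Nonempty α] (G : SimpleGraph α) : 1 ≤ G.indepNum := by
  simpa using IsIndepSet.card_le_indepNum (G := G) (t := {Classical.arbitrary α})
    (by simp [IsIndepSet])

theorem indepNum_le_card [Fintype α] (G : SimpleGraph α) : G.indepNum ≤ Fintype.card α := by
  obtain ⟨s, hs⟩ := G.exists_isNIndepSet_indepNum
  exact hs.card_eq ▸ s.card_le_univ

theorem indepNum_eq_zero_of_isEmpty [IsEmpty α] (G : SimpleGraph α) : G.indepNum = 0 := by
  obtain ⟨s, hs⟩ := G.exists_isNIndepSet_indepNum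
  rw [← hs.card_eq, s.eq_empty_of_isEmpty, card_empty]

theorem card_le_indepNum_bot [Fintype α] : Fintype.card α ≤ (⊥ : SimpleGraph α).indepNum :=
  IsIndepSet.card_le_indepNum (t := univ) fun _ _ _ _ _ h => h

theorem indepNum_mul_le_indepNum_strongProd [Finite α] [Finite β] :
    G.indepNum * H.indepNum ≤ (G.strongProd H).indepNum := by
  obtain ⟨s, hs⟩ := G.exists_isNIndepSet_indepNum
  obtain ⟨t, ht⟩ := H.exists_isNIndepSet_indepNum
  rw [← hs.card_eq, ← ht.card_eq, ← card_product]
  refine IsIndepSet.card_le_indepNum ?_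
  rintro ⟨a, b⟩ hab ⟨a', b'⟩ hab' hne hadj
  obtain ⟨-, h₁, h₂⟩ := strongProd_adj.1 hadj
  simp only [coe_product, Set.mem_prod, mem_coe] at hab hab'
  by_cases ha : a = a'
  · subst ha
    have hb : b ≠ b' := fun hb => hne (by rw [hb])
    exact ht.isIndepSet hab.2 hab'.2 hb (h₂.resolve_left hb)
  · exact hs.isIndepSet hab.1 hab'.1 ha (h₁.resolve_left ha)

end SimpleGraph

theorem gIndepNum_eq_indepNum [Fintype α] (G : SimpleGraph α) : gIndepNum G = G.indepNum := by
  simp only [gIndepNum, indepNum, isNIndepSet_iff, IsIndepSet, and_comm]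

section StrongPower

variable {G : SimpleGraph α}

theorem eq_or_gStrongPow_adj {k : ℕ} {u v : Fin k → α} :
    u = v ∨ (gStrongPow G k).Adj u v ↔ ∀ i, u i = v i ∨ G.Adj (u i) (v i) := by
  refine ⟨?_, fun h => (em (u = v)).imp_right fun hne => ⟨hne, h⟩⟩
  rintro (rfl | ⟨-, h⟩)
  · simp
  · exact h

theorem gStrongPow_comap_append_le (i j : ℕ) :
    (gStrongPow G (i + j)).comap (Fin.appendEquiv i j) ≤
      (gStrongPow G i).strongProd (gStrongPow G j) := by
  refine comap_le_of_eq_or_adj fun p q h => ?_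
  rw [eq_or_gStrongPow_adj] at h
  rw [eq_or_strongProd_adj, eq_or_gStrongPow_adj, eq_or_gStrongPow_adj]
  exact ⟨fun k => by simpa using h (Fin.castAdd j k),
    fun k => by simpa using h (Fin.natAdd i k)⟩

variable (G) [Finite α]

theorem indepNum_gStrongPow_mul_le (i j : ℕ) :
    (gStrongPow G i).indepNum * (gStrongPow G j).indepNum ≤ (gStrongPow G (i + j)).indepNum :=
  indepNum_mul_le_indepNum_strongProd.trans <|
    indepNum_le_of_injective (Fin.appendEquiv i j).injective (gStrongPow_comap_append_le i j)

theorem indepNum_gStrongPow_pow_le (m q : ℕ) :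
    (gStrongPow G m).indepNum ^ q ≤ (gStrongPow G (m * q)).indepNum := by
  induction q with
  | zero => rw [pow_zero, mul_zero]; exact one_le_indepNum _
  | succ q ih =>
    rw [pow_succ, mul_add_one]
    exact (Nat.mul_le_mul_right _ ih).trans (indepNum_gStrongPow_mul_le G _ _)

theorem indepNum_gStrongPow_le_add [Nonempty α] (j r : ℕ) :
    (gStrongPow G j).indepNum ≤ (gStrongPow G (j + r)).indepNum :=
  (Nat.le_mul_of_pos_right _ (one_le_indepNum _)).trans (indepNum_gStrongPow_mul_le G j r)

end StrongPower

section Mixing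

variable {n i : ℕ}

def splitEquiv (S : {S : Finset (Fin n) // #S = i}) : Fin i ⊕ Fin (n - i) ≃ Fin n :=
  finSumEquivOfFinset S.2 (by rw [card_compl, Fintype.card_fin, S.2])

theorem mem_iff_isLeft_splitEquiv_symm (S : {S : Finset (Fin n) // #S = i}) (x : Fin n) :
    x ∈ S.1 ↔ ((splitEquiv S).symm x).isLeft := by
  rcases h : (splitEquiv S).symm x with j | j <;> rw [(splitEquiv S).symm_apply_eq] at h <;>
    simp [h, splitEquiv, finSumEquivOfFinset_inl, finSumEquivOfFinset_inr,
      ← mem_compl (s := S.1), orderEmbOfFin_mem]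

/-- For `p = (S, u, v)`: the word reading `u` on the positions in `S`, in increasing order, and
`v` on the others. -/
def mixVertex (p : {S : Finset (Fin n) // #S = i} × (Fin i → α) × (Fin (n - i) → β)) :
    Fin n → α ⊕ β :=
  Sum.map p.2.1 p.2.2 ∘ (splitEquiv p.1).symm

theorem of_forall_liftRel_mixVertex {r : α → α → Prop} {s : β → β → Prop}
    {p q : {S : Finset (Fin n) // #S = i} × (Fin i → α) × (Fin (n - i) → β)}
    (h : ∀ x, Sum.LiftRel r s (mixVertex p x) (mixVertex q x)) :
    p.1 = q.1 ∧ (∀ j, r (p.2.1 j) (q.2.1 j)) ∧ ∀ j, s (p.2.2 j) (q.2.2 j) := by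
  obtain ⟨S, u, v⟩ := p
  obtain ⟨S', u', v'⟩ := q
  obtain rfl : S = S' := Subtype.ext <| Finset.ext fun x => by
    rw [mem_iff_isLeft_splitEquiv_symm, mem_iff_isLeft_splitEquiv_symm,
      ← Sum.isLeft_map u v, ← Sum.isLeft_map u' v']
    exact (h x).isLeft_congr
  refine ⟨rfl, fun j => ?_, fun j => ?_⟩
  · simpa [mixVertex] using h (splitEquiv S (.inl j))
  · simpa [mixVertex] using h (splitEquiv S (.inr j))

theorem mixVertex_injective : Injective (@mixVertex α β n i) := by
  intro p q h
  obtain ⟨hS, hu, hv⟩ := of_forall_liftRel_mixVertex (p := p) (q := q) fun x => by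
    rw [h]
    exact Sum.LiftRel.refl Eq Eq _
  exact Prod.ext hS (Prod.ext (funext hu) (funext hv))

theorem gStrongPow_sum_comap_mixVertex_le (G : SimpleGraph α) (H : SimpleGraph β) :
    (gStrongPow (G ⊕g H) n).comap mixVertex ≤
      (⊥ : SimpleGraph {S : Finset (Fin n) // #S = i}).strongProd
        ((gStrongPow G i).strongProd (gStrongPow H (n - i))) := by
  refine comap_le_of_eq_or_adj fun p q h => ?_
  simp only [eq_or_gStrongPow_adj, eq_or_sum_adj] at h
  simp only [eq_or_strongProd_adj, eq_or_gStrongPow_adj, bot_adj, or_false]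
  exact of_forall_liftRel_mixVertex h

theorem choose_mul_le_indepNum_gStrongPow_sum [Finite α] [Finite β]
    (G : SimpleGraph α) (H : SimpleGraph β) (n i : ℕ) :
    n.choose i * ((gStrongPow G i).indepNum * (gStrongPow H (n - i)).indepNum) ≤
      (gStrongPow (G ⊕g H) n).indepNum := by
  rw [show n.choose i = Fintype.card {S : Finset (Fin n) // #S = i} by simp]
  calc _ ≤ (⊥ : SimpleGraph {S : Finset (Fin n) // #S = i}).indepNum *
        ((gStrongPow G i).strongProd (gStrongPow H (n - i))).indepNum :=
        Nat.mul_le_mul card_le_indepNum_bot indepNum_mul_le_indepNum_strongProd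
    _ ≤ _ := indepNum_mul_le_indepNum_strongProd
    _ ≤ _ := indepNum_le_of_injective mixVertex_injective
        (gStrongPow_sum_comap_mixVertex_le G H)

end Mixing

theorem le_of_eventually_pow_le_mul_pow {r s C : ℝ} (hr : 0 ≤ r) (hs : 0 ≤ s)
    (h : ∀ᶠ n : ℕ in atTop, r ^ n ≤ C * (n + 1) * s ^ n) : r ≤ s := by
  by_contra! hsr
  have hr₀ : 0 < r := hs.trans_lt hsr
  set t := s / r
  have ht₀ : 0 ≤ t := div_nonneg hs hr
  have ht₁ : t < 1 := (div_lt_one hr₀).2 hsr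
  have hlim : Tendsto (fun n : ℕ => C * ((n + 1) * t ^ n)) atTop (𝓝 0) := by
    simpa [add_mul] using ((tendsto_self_mul_const_pow_of_lt_one ht₀ ht₁).add
      (tendsto_pow_atTop_nhds_zero_of_lt_one ht₀ ht₁)).const_mul C
  obtain ⟨n, hn, hsmall⟩ := (h.and (hlim.eventually (gt_mem_nhds one_pos))).exists
  have hrn : 0 < r ^ n := pow_pos hr₀ n
  have hscale : C * ((n + 1) * t ^ n) * r ^ n = C * (n + 1) * s ^ n := by
    rw [div_pow]
    field_simp
  nlinarith

noncomputable def rootIndepNum (G : SimpleGraph α) (n : ℕ) : ℝ :=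
  ((gStrongPow G n).indepNum : ℝ) ^ ((n : ℝ)⁻¹)

section RootIndepNum

variable (G : SimpleGraph α) {m n : ℕ}

theorem rootIndepNum_nonneg : 0 ≤ rootIndepNum G n :=
  Real.rpow_nonneg (Nat.cast_nonneg _) _

theorem rootIndepNum_pow (hn : n ≠ 0) : rootIndepNum G n ^ n = (gStrongPow G n).indepNum :=
  Real.rpow_inv_natCast_pow (Nat.cast_nonneg _) hn

variable [Finite α]

theorem rootIndepNum_le_mul (k : ℕ) {l : ℕ} (hl : l ≠ 0) :
    rootIndepNum G k ≤ rootIndepNum G (k * l) := by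
  rcases eq_or_ne k 0 with rfl | hk
  · simp [rootIndepNum]
  have hkl : k * l ≠ 0 := mul_ne_zero hk hl
  calc rootIndepNum G k = (rootIndepNum G k ^ (k * l)) ^ (((k * l : ℕ) : ℝ)⁻¹) :=
        (Real.pow_rpow_inv_natCast (rootIndepNum_nonneg G) hkl).symm
    _ ≤ ((gStrongPow G (k * l)).indepNum : ℝ) ^ (((k * l : ℕ) : ℝ)⁻¹) := by
        refine Real.rpow_le_rpow (pow_nonneg (rootIndepNum_nonneg G) _) ?_ (by positivity)
        rw [pow_mul, rootIndepNum_pow G hk]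
        exact_mod_cast indepNum_gStrongPow_pow_le G k l
    _ = rootIndepNum G (k * l) := rfl

theorem exists_pow_rootIndepNum_le (hm : m ≠ 0) :
    ∃ C, 0 ≤ C ∧ ∀ i, rootIndepNum G m ^ i ≤ C * (gStrongPow G i).indepNum := by
  set x := rootIndepNum G m
  have hx : 0 ≤ x := rootIndepNum_nonneg G
  refine ⟨max 1 (x ^ m), zero_le_one.trans (le_max_left _ _), fun i => ?_⟩
  rcases isEmpty_or_nonempty α with _ | _
  · have hx₀ : x = 0 := by
      have : NeZero m := ⟨hm⟩
      simp [x, rootIndepNum, indepNum_eq_zero_of_isEmpty, hm]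
    rcases eq_or_ne i 0 with rfl | hi
    · rw [pow_zero]
      exact one_le_mul_of_one_le_of_one_le (le_max_left _ _) (mod_cast one_le_indepNum _)
    · simp [hx₀, zero_pow hi]
  · have hr : i % m ≤ m := (Nat.mod_lt i (Nat.pos_of_ne_zero hm)).le
    have hsmall : x ^ (i % m) ≤ max 1 (x ^ m) := by
      rcases le_total x 1 with h | h
      · exact le_max_of_le_left (pow_le_one₀ hx h)
      · exact le_max_of_le_right (pow_le_pow_right₀ h hr)
    rw [← Nat.div_add_mod i m]
    calc x ^ (m * (i / m) + i % m) = (gStrongPow G m).indepNum ^ (i / m) * x ^ (i % m) := by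
          rw [pow_add, pow_mul, rootIndepNum_pow G hm]
      _ ≤ (gStrongPow G (m * (i / m))).indepNum * max 1 (x ^ m) := by
          gcongr
          exact_mod_cast indepNum_gStrongPow_pow_le G m (i / m)
      _ ≤ (gStrongPow G (m * (i / m) + i % m)).indepNum * max 1 (x ^ m) := by
          gcongr
          exact indepNum_gStrongPow_le_add G _ _
      _ = _ := mul_comm _ _

end RootIndepNum

theorem add_pow_le_mul_indepNum_gStrongPow_sum [Finite α] [Finite β]
    (G : SimpleGraph α) (H : SimpleGraph β) {x y C₁ C₂ : ℝ} (hy : 0 ≤ y)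
    (hC₁ : 0 ≤ C₁) (hC₂ : 0 ≤ C₂)
    (hG : ∀ i, x ^ i ≤ C₁ * (gStrongPow G i).indepNum)
    (hH : ∀ i, y ^ i ≤ C₂ * (gStrongPow H i).indepNum) (n : ℕ) :
    (x + y) ^ n ≤ C₁ * C₂ * (n + 1) * (gStrongPow (G ⊕g H) n).indepNum := by
  rw [add_pow]
  calc ∑ i ∈ range (n + 1), x ^ i * y ^ (n - i) * n.choose i
      ≤ ∑ _i ∈ range (n + 1), C₁ * C₂ * (gStrongPow (G ⊕g H) n).indepNum := by
        refine sum_le_sum fun i _ => ?_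
        calc x ^ i * y ^ (n - i) * n.choose i
            ≤ C₁ * (gStrongPow G i).indepNum * (C₂ * (gStrongPow H (n - i)).indepNum)
              * n.choose i := by
              gcongr
              exacts [hG i, hH (n - i)]
          _ = C₁ * C₂ * ((n.choose i * ((gStrongPow G i).indepNum *
              (gStrongPow H (n - i)).indepNum) : ℕ) : ℝ) := by push_cast; ring
          _ ≤ _ := by
            gcongr
            exact choose_mul_le_indepNum_gStrongPow_sum G H n i
    _ = _ := by rw [sum_const, card_range, nsmul_eq_mul]; push_cast; ring

section Capacity

variable [Fintype α] [Fintype β] (G : SimpleGraph α)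

theorem gShannonCapacity_eq_iSup : gShannonCapacity G = ⨆ k : ℕ, rootIndepNum G (k + 1) := by
  simp [gShannonCapacity, rootIndepNum, gIndepNum_eq_indepNum]

theorem rootIndepNum_le_card {n : ℕ} (hn : n ≠ 0) : rootIndepNum G n ≤ Fintype.card α := by
  have h := (gStrongPow G n).indepNum_le_card
  rw [Fintype.card_fun, Fintype.card_fin] at h
  calc rootIndepNum G n ≤ ((Fintype.card α : ℝ) ^ n) ^ ((n : ℝ)⁻¹) := by
        unfold rootIndepNum
        gcongr
        exact_mod_cast h
    _ = Fintype.card α := Real.pow_rpow_inv_natCast (Nat.cast_nonneg _) hn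

theorem rootIndepNum_le_gShannonCapacity {n : ℕ} (hn : n ≠ 0) :
    rootIndepNum G n ≤ gShannonCapacity G := by
  obtain ⟨k, rfl⟩ := Nat.exists_eq_succ_of_ne_zero hn
  rw [gShannonCapacity_eq_iSup]
  refine le_ciSup (f := fun k => rootIndepNum G (k + 1)) ⟨(Fintype.card α : ℝ), ?_⟩ k
  exact Set.forall_mem_range.2 fun k => rootIndepNum_le_card G k.succ_ne_zero

theorem gShannonCapacity_nonneg : 0 ≤ gShannonCapacity G :=
  (rootIndepNum_nonneg G).trans (rootIndepNum_le_gShannonCapacity G one_ne_zero)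

theorem indepNum_le_gShannonCapacity_pow {n : ℕ} (hn : n ≠ 0) :
    ((gStrongPow G n).indepNum : ℝ) ≤ gShannonCapacity G ^ n := by
  rw [← rootIndepNum_pow G hn]
  exact pow_le_pow_left₀ (rootIndepNum_nonneg G) (rootIndepNum_le_gShannonCapacity G hn) n

theorem rootIndepNum_add_le_gShannonCapacity_sum (H : SimpleGraph β) {m : ℕ} (hm : m ≠ 0) :
    rootIndepNum G m + rootIndepNum H m ≤ gShannonCapacity (G ⊕g H) := by
  obtain ⟨C₁, hC₁, hG⟩ := exists_pow_rootIndepNum_le G hm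
  obtain ⟨C₂, hC₂, hH⟩ := exists_pow_rootIndepNum_le H hm
  refine le_of_eventually_pow_le_mul_pow (C := C₁ * C₂)
    (add_nonneg (rootIndepNum_nonneg G) (rootIndepNum_nonneg H)) (gShannonCapacity_nonneg _) ?_
  filter_upwards [eventually_ne_atTop 0] with n hn
  calc _ ≤ C₁ * C₂ * (n + 1) * (gStrongPow (G ⊕g H) n).indepNum :=
        add_pow_le_mul_indepNum_gStrongPow_sum G H (rootIndepNum_nonneg H) hC₁ hC₂ hG hH n
    _ ≤ _ := by gcongr; exact indepNum_le_gShannonCapacity_pow _ hn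

end Capacity

end

/-- For all finite simple graphs `G₁`, `G₂`, the Shannon capacity of the disjoint
union satisfies `c(G₁ + G₂) ≥ c(G₁) + c(G₂)`. -/
theorem shannonCapacity_sum_ge
    {α β : Type*} [Fintype α] [Fintype β] (G₁ : SimpleGraph α) (G₂ : SimpleGraph β) :
    gShannonCapacity G₁ + gShannonCapacity G₂ ≤ gShannonCapacity (G₁ ⊕g G₂) := by
  rw [gShannonCapacity_eq_iSup G₁, gShannonCapacity_eq_iSup G₂]
  refine le_sub_iff_add_le.1 (ciSup_le fun k => le_sub_iff_add_le.2 ?_)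
  refine le_sub_iff_add_le'.1 (ciSup_le fun l => le_sub_iff_add_le'.2 ?_)
  calc rootIndepNum G₁ (k + 1) + rootIndepNum G₂ (l + 1)
      ≤ rootIndepNum G₁ ((k + 1) * (l + 1)) + rootIndepNum G₂ ((k + 1) * (l + 1)) := by
        gcongr
        · exact rootIndepNum_le_mul G₁ _ l.succ_ne_zero
        · rw [mul_comm]; exact rootIndepNum_le_mul G₂ _ k.succ_ne_zero
    _ ≤ _ := rootIndepNum_add_le_gShannonCapacity_sum G₁ G₂ (by positivity)
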